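/- arXiv:2407.18346 — 5 statements merged into one kernel-verified Lean document; each statement's English description precedes it below -/
import Mathlib

section
/- Let G be a graph with girth at least 2k-1 that admits a proper k-colouring f with colours {1,...,k}. Orient each edge uv as u → v if and only if f(u) < f(v). Then the resulting orientation is a KT orientation, i.e., between any two vertices there is at most one directed path. -/
/-- `l` is a directed path (list of distinct vertices, consecutive ones joined by arcs)
from `u` to `v` in the digraph `D`. -/
def IsDipath {V : Type*} (D : V → V → Prop) (u v : V) (l : List V) : Prop :=
  l.Chain' D ∧ l.Nodup ∧ l.head? = some u ∧ l.getLast? = some v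

/-- `l` is a directed path between `u` and `v`, in either direction. -/
def DipathBetween {V : Type*} (D : V → V → Prop) (u v : V) (l : List V) : Prop :=
  IsDipath D u v l ∨ IsDipath D v u l

/-- A digraph is a KT orientation if between any two vertices there is at most one
directed path (in either direction). -/
def IsKT {V : Type*} (D : V → V → Prop) : Prop :=
  ∀ u v : V, {l : List V | DipathBetween D u v l}.Subsingleton

/-- `D` is an orientation of the simple graph `G`. -/
def IsOrientation {V : Type*} (G : SimpleGraph V) (D : V → V → Prop) : Prop :=
  (∀ u v, G.Adj u v ↔ (D u v ∨ D v u)) ∧ ∀ u v, ¬ (D u v ∧ D v u)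

/-- `G` admits a KT orientation. -/
def AdmitsKT {V : Type*} (G : SimpleGraph V) : Prop :=
  ∃ D : V → V → Prop, IsOrientation G D ∧ IsKT D

/-- `a` and `b` are consecutive (in this order) in the list `l`. -/
def ConsecIn {V : Type*} (l : List V) (a b : V) : Prop :=
  (a, b) ∈ l.zip l.tail

/-!
Colours strictly increase along a directed path, so a directed path has at most `k` vertices and
no two directed paths join `u` and `v` in opposite directions. Two distinct directed paths from
`u` to `v` would contain a cycle of length at most `2 (k - 1) < 2k - 1 ≤ girth G`.
-/

namespace SimpleGraph

variable {V : Type*} {G : SimpleGraph V}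

/- The edges of two distinct paths span a subgraph that is not acyclic, and a cycle there uses
each of its at most `p.length + q.length` edges once. -/
theorem girth_le_length_add_length {u v : V} {p q : G.Walk u v} (hp : p.IsPath)
    (hq : q.IsPath) (hpq : p ≠ q) : G.girth ≤ p.length + q.length := by
  set H := fromEdgeSet {e | e ∈ p.edges ++ q.edges}
  have hHG : H ≤ G := (fromEdgeSet_le G).2 fun e he => by
    rcases List.mem_append.1 he.1 with he' | he'
    exacts [p.edges_subset_edgeSet he', q.edges_subset_edgeSet he']
  have hpH : ∀ e ∈ p.edges, e ∈ H.edgeSet := fun e he => by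
    rw [edgeSet_fromEdgeSet]
    exact ⟨List.mem_append_left _ he, G.not_isDiag_of_mem_edgeSet (p.edges_subset_edgeSet he)⟩
  have hqH : ∀ e ∈ q.edges, e ∈ H.edgeSet := fun e he => by
    rw [edgeSet_fromEdgeSet]
    exact ⟨List.mem_append_right _ he, G.not_isDiag_of_mem_edgeSet (q.edges_subset_edgeSet he)⟩
  have hH : ¬ H.IsAcyclic := fun hH => hpq <| Walk.ext_support <| by
    have := congrArg (fun r : H.Path u v => r.1.support)
      ((hH.subsingleton_path u v).elim ⟨_, hp.transfer hpH⟩ ⟨_, hq.transfer hqH⟩)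
    simpa only [Walk.support_transfer] using this
  obtain ⟨a, c, hc⟩ : ∃ a, ∃ c : H.Walk a a, c.IsCycle := by simpa [IsAcyclic] using hH
  have hcpq : c.edges ⊆ p.edges ++ q.edges := fun e he => by
    have := c.edges_subset_edgeSet he
    rw [edgeSet_fromEdgeSet] at this
    exact this.1
  calc G.girth ≤ H.girth := girth_anti hHG hH
    _ ≤ c.length := girth_le_length hc
    _ = c.edges.length := c.length_edges.symm
    _ ≤ (p.edges ++ q.edges).length := (List.subperm_of_subset hc.edges_nodup hcpq).length_le
    _ = p.length + q.length := by simp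

end SimpleGraph

section Colouring

variable {V α : Type*} [Preorder α] {f : V → α} {l : List V}

lemma List.IsChain.pairwise_comp_lt (h : l.IsChain fun a b => f a < f b) :
    l.Pairwise fun a b => f a < f b :=
  List.pairwise_map.1 ((List.isChain_map f).2 h).pairwise

lemma List.IsChain.length_le_card_of_comp_lt [Fintype α] (h : l.IsChain fun a b => f a < f b) :
    l.length ≤ Fintype.card α := by
  simpa using (List.pairwise_map.2 h.pairwise_comp_lt).nodup.length_le_card

end Colouring

namespace IsDipath

variable {V : Type*} {D : V → V → Prop} {u v : V} {l : List V}

lemma eq_singleton (h : IsDipath D u u l) : l = [u] := by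
  obtain ⟨-, hnd, hu, hu'⟩ := h
  obtain ⟨t, rfl⟩ := List.head?_eq_some_iff.1 hu
  cases t with
  | nil => rfl
  | cons b t =>
    rw [List.getLast?_cons_cons] at hu'
    exact absurd (List.mem_of_getLast? hu') (List.nodup_cons.1 hnd).1

lemma exists_isPath_support_eq {G : SimpleGraph V} (hDG : ∀ a b, D a b → G.Adj a b)
    (h : IsDipath D u v l) : ∃ p : G.Walk u v, p.IsPath ∧ p.support = l := by
  obtain ⟨hc, hnd, hu, hv⟩ := h
  have hne : l ≠ [] := by rintro rfl; simp at hu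
  have hc' : l.IsChain G.Adj := hc.imp hDG
  have hu' : l.head hne = u :=
    Option.some_injective _ ((List.head?_eq_some_head hne).symm.trans hu)
  have hv' : l.getLast hne = v :=
    Option.some_injective _ ((List.getLast?_eq_some_getLast hne).symm.trans hv)
  refine ⟨(SimpleGraph.Walk.ofSupport l hne hc').copy hu' hv', ?_, by simp⟩
  rw [SimpleGraph.Walk.isPath_def]
  simpa using hnd

variable {α : Type*} [Preorder α] {f : V → α}

lemma lt_of_ne (hDf : ∀ a b, D a b → f a < f b) (h : IsDipath D u v l) (huv : u ≠ v) :
    f u < f v := by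
  obtain ⟨hc, -, hu, hv⟩ := h
  have hpw := (hc.imp hDf).pairwise_comp_lt
  obtain ⟨t, rfl⟩ := List.head?_eq_some_iff.1 hu
  have hvt : v ∈ t := (List.mem_cons.1 (List.mem_of_getLast? hv)).resolve_left huv.symm
  exact List.rel_of_pairwise_cons hpw hvt

lemma eq_of_two_mul_card_sub_one_le_girth [Fintype α] {G : SimpleGraph V}
    (hDG : ∀ a b, D a b → G.Adj a b) (hDf : ∀ a b, D a b → f a < f b)
    (hg : 2 * Fintype.card α - 1 ≤ G.girth) {l₁ l₂ : List V}
    (h₁ : IsDipath D u v l₁) (h₂ : IsDipath D u v l₂) : l₁ = l₂ := by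
  by_contra hne
  obtain ⟨p₁, hp₁, rfl⟩ := h₁.exists_isPath_support_eq hDG
  obtain ⟨p₂, hp₂, rfl⟩ := h₂.exists_isPath_support_eq hDG
  have hcard : 0 < Fintype.card α := Fintype.card_pos_iff.2 ⟨f u⟩
  have hlen₁ := (h₁.1.imp hDf).length_le_card_of_comp_lt
  have hlen₂ := (h₂.1.imp hDf).length_le_card_of_comp_lt
  have hgirth := SimpleGraph.girth_le_length_add_length hp₁ hp₂ (by rintro rfl; exact hne rfl)
  simp only [SimpleGraph.Walk.length_support] at hlen₁ hlen₂
  omega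

end IsDipath

theorem girth_colouring_kt_general {V : Type*} (G : SimpleGraph V) (k : ℕ)
    (f : V → Fin k)
    (hg : (2 * k - 1 : ℕ) ≤ G.girth)
    (D : V → V → Prop)
    (hD : ∀ u v, D u v ↔ G.Adj u v ∧ f u < f v) :
    IsKT D := by
  intro u v l₁ h₁ l₂ h₂
  have hDG : ∀ a b, D a b → G.Adj a b := fun a b h => ((hD a b).1 h).1
  have hDf : ∀ a b, D a b → f a < f b := fun a b h => ((hD a b).1 h).2
  have hg' : 2 * Fintype.card (Fin k) - 1 ≤ G.girth := by simpa using hg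
  by_cases huv : u = v
  · subst huv
    rw [h₁.elim IsDipath.eq_singleton IsDipath.eq_singleton,
      h₂.elim IsDipath.eq_singleton IsDipath.eq_singleton]
  rcases h₁ with h₁ | h₁ <;> rcases h₂ with h₂ | h₂
  · exact h₁.eq_of_two_mul_card_sub_one_le_girth hDG hDf hg' h₂
  · exact absurd (h₂.lt_of_ne hDf (Ne.symm huv)) (lt_asymm (h₁.lt_of_ne hDf huv))
  · exact absurd (h₂.lt_of_ne hDf huv) (lt_asymm (h₁.lt_of_ne hDf (Ne.symm huv)))
  · exact h₁.eq_of_two_mul_card_sub_one_le_girth hDG hDf hg' h₂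

/-- A graph with girth at least `2k-1` admitting a proper `k`-colouring: orienting each
edge towards the larger colour gives a KT orientation. -/
theorem girth_colouring_kt {V : Type*} (G : SimpleGraph V) (k : ℕ)
    (f : V → Fin k) (hf : ∀ u v, G.Adj u v → f u ≠ f v)
    (hg : (2 * k - 1 : ℕ) ≤ G.girth)
    (D : V → V → Prop)
    (hD : ∀ u v, D u v ↔ G.Adj u v ∧ f u < f v) :
    IsKT D :=
  girth_colouring_kt_general G k f hg D hD
end

section
/- Let G be a triangle-free graph and f a proper 3-colouring of G with colours {1,2,3} such that every 4-cycle of G uses only two colours. Orient each edge uv as u → v if and only if f(u) < f(v). Then the resulting orientation is a KT orientation of G. -/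
/-
Colours strictly increase along arcs and only three colours exist, so every directed path
has at most three vertices, and a nontrivial one from `u` to `v` forces `f u < f v`; in
particular there are no directed paths in both directions between distinct vertices. Two
different directed paths from `u` to `v` would be either an arc `u → v` beside a path
`u → w → v`, i.e. a triangle, or two paths `u → w → v` and `u → w' → v`, i.e. a 4-cycle
coloured `1, 2, 3, 2` and so using three colours.
-/

section Dipath

variable {V : Type*} {D : V → V → Prop} {u v : V} {l : List V}

lemma IsDipath.length_le_card {α : Type*} [Fintype α] [Preorder α] {f : V → α}
    (hf : ∀ x y, D x y → f x < f y) (h : IsDipath D u v l) :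
    l.length ≤ Fintype.card α := by
  have hmono : (l.map f).IsChain (· < ·) := (List.isChain_map f).mpr (h.1.imp hf)
  simpa using hmono.pairwise.nodup.length_le_card

section Fin3

variable {f : V → Fin 3} (hf : ∀ x y, D x y → f x < f y)
include hf

lemma IsDipath.eq_singleton_or_pair_or_triple (h : IsDipath D u v l) :
    (l = [u] ∧ u = v) ∨ (l = [u, v] ∧ D u v) ∨ ∃ w, l = [u, w, v] ∧ D u w ∧ D w v := by
  have hlen := h.length_le_card hf
  obtain ⟨hc, -, hh, hl⟩ := h
  replace hc : l.IsChain D := hc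
  match l, hlen with
  | [a], _ => simp_all
  | [a, b], _ => simp_all
  | [a, b, c], _ => simp_all

lemma IsDipath.rank_le (h : IsDipath D u v l) : f u ≤ f v := by
  rcases h.eq_singleton_or_pair_or_triple hf with ⟨-, rfl⟩ | ⟨-, huv⟩ | ⟨w, -, huw, hwv⟩
  · exact le_rfl
  · exact (hf _ _ huv).le
  · exact (hf _ _ huw).trans (hf _ _ hwv) |>.le

lemma IsDipath.eq_singleton_of_rank_le (h : IsDipath D u v l) (hvu : f v ≤ f u) :
    l = [u] ∧ u = v := by
  rcases h.eq_singleton_or_pair_or_triple hf with h | ⟨-, huv⟩ | ⟨w, -, huw, hwv⟩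
  · exact h
  · exact absurd hvu (hf _ _ huv).not_ge
  · exact absurd hvu ((hf _ _ huw).trans (hf _ _ hwv)).not_ge

lemma IsDipath.eq_pair_or_triple_of_ne (h : IsDipath D u v l) (huv : u ≠ v) :
    (l = [u, v] ∧ D u v) ∨ ∃ w, l = [u, w, v] ∧ D u w ∧ D w v :=
  (h.eq_singleton_or_pair_or_triple hf).resolve_left fun h => huv h.2

lemma IsDipath.eq_of_reverse {l' : List V} (h : IsDipath D u v l) (h' : IsDipath D v u l') :
    l = l' := by
  obtain ⟨rfl, rfl⟩ := h.eq_singleton_of_rank_le hf (h'.rank_le hf)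
  exact (h'.eq_singleton_of_rank_le hf le_rfl).1.symm

variable (htri : ∀ u w v, D u w → D w v → ¬ D u v)
  (hsq : ∀ u w w' v, D u w → D w v → D u w' → D w' v → w = w')
include htri hsq

lemma IsDipath.unique {l' : List V} (h : IsDipath D u v l) (h' : IsDipath D u v l') :
    l = l' := by
  by_cases huv : u = v
  · subst huv
    rw [(h.eq_singleton_of_rank_le hf le_rfl).1, (h'.eq_singleton_of_rank_le hf le_rfl).1]
  rcases h.eq_pair_or_triple_of_ne hf huv with ⟨rfl, hD⟩ | ⟨w, rfl, huw, hwv⟩ <;>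
    rcases h'.eq_pair_or_triple_of_ne hf huv with ⟨rfl, hD'⟩ | ⟨w', rfl, huw', hw'v⟩
  · rfl
  · exact absurd hD (htri _ _ _ huw' hw'v)
  · exact absurd hD' (htri _ _ _ huw hwv)
  · rw [hsq _ _ _ _ huw hwv huw' hw'v]

theorem isKT_of_rank_fin_three : IsKT D := by
  rintro u v l (h | h) l' (h' | h')
  · exact h.unique hf htri hsq h'
  · exact h.eq_of_reverse hf h'
  · exact (h'.eq_of_reverse hf h).symm
  · exact h.unique hf htri hsq h'

end Fin3

end Dipath

lemma Fin.eq_zero_one_two_of_lt_of_lt {a b c : Fin 3} (hab : a < b) (hbc : b < c) :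
    a = 0 ∧ b = 1 ∧ c = 2 := by
  omega

theorem three_colouring_two_coloured_squares_kt_general {V : Type*} (G : SimpleGraph V)
    (htf : G.CliqueFree 3) (f : V → Fin 3)
    (h4 : ∀ a b c d : V, a ≠ b → b ≠ c → c ≠ d → d ≠ a → a ≠ c → b ≠ d →
      G.Adj a b → G.Adj b c → G.Adj c d → G.Adj d a →
      ({f a, f b, f c, f d} : Finset (Fin 3)).card ≤ 2)
    (D : V → V → Prop)
    (hD : ∀ u v, D u v ↔ G.Adj u v ∧ f u < f v) :
    IsKT D := by
  classical
  have hrank : ∀ x y, D x y → f x < f y := fun x y hxy => ((hD x y).1 hxy).2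
  have hadj : ∀ {x y}, D x y → G.Adj x y := fun hxy => ((hD _ _).1 hxy).1
  have hne : ∀ {x y}, D x y → x ≠ y := fun hxy => ne_of_apply_ne f (hrank _ _ hxy).ne
  refine isKT_of_rank_fin_three hrank ?_ ?_
  · intro u w v huw hwv huv
    exact htf {u, w, v} (SimpleGraph.is3Clique_triple_iff.2 ⟨hadj huw, hadj huv, hadj hwv⟩)
  · intro u w w' v huw hwv huw' hw'v
    by_contra hww'
    obtain ⟨hu, hw, hv⟩ := Fin.eq_zero_one_two_of_lt_of_lt (hrank _ _ huw) (hrank _ _ hwv)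
    obtain ⟨-, hw', -⟩ := Fin.eq_zero_one_two_of_lt_of_lt (hrank _ _ huw') (hrank _ _ hw'v)
    have hcard := h4 u w v w' (hne huw) (hne hwv) (hne hw'v).symm (hne huw').symm
      (ne_of_apply_ne f (by simp [hu, hv])) hww'
      (hadj huw) (hadj hwv) (hadj hw'v).symm (hadj huw').symm
    rw [hu, hw, hv, hw'] at hcard
    exact absurd hcard (by decide)

/-- A triangle-free graph with a proper 3-colouring in which every 4-cycle gets only
two colours admits a KT orientation, obtained by orienting each edge towards the
larger colour. -/
theorem three_colouring_two_coloured_squares_kt {V : Type*} (G : SimpleGraph V)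
    (htf : G.CliqueFree 3) (f : V → Fin 3)
    (hf : ∀ u v, G.Adj u v → f u ≠ f v)
    (h4 : ∀ a b c d : V, a ≠ b → b ≠ c → c ≠ d → d ≠ a → a ≠ c → b ≠ d →
      G.Adj a b → G.Adj b c → G.Adj c d → G.Adj d a →
      ({f a, f b, f c, f d} : Finset (Fin 3)).card ≤ 2)
    (D : V → V → Prop)
    (hD : ∀ u v, D u v ↔ G.Adj u v ∧ f u < f v) :
    IsKT D :=
  three_colouring_two_coloured_squares_kt_general G htf f h4 D hD
end

section
/- Let G be a graph and e a bridge of G. Then G admits a KT orientation if and only if every connected component of G − e admits a KT orientation. -/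
/-!
Restricting a KT orientation to a subgraph, or pulling it back along an injection, keeps it KT;
this gives the forward direction. Conversely, the directed paths of an orientation stay inside
one connected component, so KT orientations of the components of `G - e` glue to one of `G - e`.
Orienting the bridge as `a → b` only creates new directed paths from the component of `a` to
that of `b`, each the concatenation of a path ending at `a` and a path starting at `b`; both
halves are unique, hence so is the whole path.
-/

open Function SimpleGraph

section Dipaths

variable {α β : Type*} {D D' : β → β → Prop} {u v z : β} {l : List β}

theorem isDipath_iff :
    IsDipath D u v l ↔ l.IsChain D ∧ l.Nodup ∧ l.head? = some u ∧ l.getLast? = some v :=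
  Iff.rfl

theorem IsDipath.mono (hDD' : ∀ x y, D x y → D' x y) (h : IsDipath D u v l) :
    IsDipath D' u v l :=
  ⟨List.IsChain.imp hDD' h.1, h.2⟩

theorem DipathBetween.mono (hDD' : ∀ x y, D x y → D' x y) (h : DipathBetween D u v l) :
    DipathBetween D' u v l :=
  h.imp (IsDipath.mono hDD') (IsDipath.mono hDD')

theorem IsKT.mono (hDD' : ∀ x y, D x y → D' x y) (h : IsKT D') : IsKT D :=
  fun u v _ h₁ _ h₂ => h u v (DipathBetween.mono hDD' h₁) (DipathBetween.mono hDD' h₂)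

theorem isDipath_map_iff {f : α → β} (hf : Injective f) {x y : α} {l : List α} :
    IsDipath D (f x) (f y) (l.map f) ↔ IsDipath (fun a b => D (f a) (f b)) x y l := by
  simp [isDipath_iff, List.isChain_map, List.nodup_map_iff hf, List.head?_map,
    List.getLast?_map, hf.eq_iff]

theorem dipathBetween_map_iff {f : α → β} (hf : Injective f) {x y : α} {l : List α} :
    DipathBetween D (f x) (f y) (l.map f) ↔ DipathBetween (fun a b => D (f a) (f b)) x y l :=
  or_congr (isDipath_map_iff hf) (isDipath_map_iff hf)

theorem IsKT.comap {f : α → β} (hf : Injective f) (h : IsKT D) :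
    IsKT (fun a b => D (f a) (f b)) := fun x y _ h₁ _ h₂ =>
  List.map_injective_iff.mpr hf <|
    h (f x) (f y) ((dipathBetween_map_iff hf).mpr h₁) ((dipathBetween_map_iff hf).mpr h₂)

theorem DipathBetween.right_mem (h : DipathBetween D u v l) : v ∈ l := by
  rcases h with h | h
  · exact List.mem_of_getLast? h.2.2.2
  · exact List.mem_of_mem_head? h.2.2.1

variable {G : SimpleGraph β}

theorem IsDipath.reachable_of_mem (hD : ∀ x y, D x y → G.Adj x y) (h : IsDipath D u v l)
    (hz : z ∈ l) : G.Reachable u z := by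
  refine h.1.induction (G.Reachable u) l (fun x y hxy hx => hx.trans (hD x y hxy).reachable)
    (fun hl => ?_) z hz
  rw [(List.head_eq_iff_head?_eq_some hl).mpr h.2.2.1]

theorem IsDipath.reachable (hD : ∀ x y, D x y → G.Adj x y) (h : IsDipath D u v l) :
    G.Reachable u v :=
  h.reachable_of_mem hD (List.mem_of_getLast? h.2.2.2)

theorem DipathBetween.reachable_of_mem (hD : ∀ x y, D x y → G.Adj x y)
    (h : DipathBetween D u v l) (hz : z ∈ l) : G.Reachable u z := by
  rcases h with h | h
  · exact h.reachable_of_mem hD hz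
  · exact (h.reachable hD).symm.trans (h.reachable_of_mem hD hz)

end Dipaths

section Orientations

variable {V W : Type*} {G H : SimpleGraph V} {D : V → V → Prop}

theorem IsOrientation.adj (hD : IsOrientation G D) {u v : V} (h : D u v) : G.Adj u v :=
  (hD.1 u v).mpr (Or.inl h)

theorem IsOrientation.mono (hD : IsOrientation G D) (hHG : H ≤ G) :
    IsOrientation H (fun u v => D u v ∧ H.Adj u v) := by
  refine ⟨fun u v => ⟨fun h => ?_, fun h => h.elim (·.2) (·.2.symm)⟩,
    fun u v h => hD.2 u v ⟨h.1.1, h.2.1⟩⟩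
  exact ((hD.1 u v).mp (hHG h)).imp (⟨·, h⟩) (⟨·, h.symm⟩)

theorem AdmitsKT.mono (h : AdmitsKT G) (hHG : H ≤ G) : AdmitsKT H :=
  let ⟨_, hD, hkt⟩ := h
  ⟨_, hD.mono hHG, hkt.mono fun _ _ => And.left⟩

theorem AdmitsKT.comap {G : SimpleGraph W} (h : AdmitsKT G) (f : V ↪ W) :
    AdmitsKT (G.comap f) :=
  let ⟨D, hD, hkt⟩ := h
  ⟨fun u v => D (f u) (f v), ⟨fun u v => hD.1 (f u) (f v), fun u v => hD.2 (f u) (f v)⟩,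
    hkt.comap f.injective⟩

theorem isKT_of_forall_connectedComponent (hD : IsOrientation G D)
    (h : ∀ c : G.ConnectedComponent, IsKT (fun x y : c.supp => D x y)) : IsKT D := by
  intro u v l₁ hl₁ l₂ hl₂
  set c := G.connectedComponentMk u
  have mem (l : List V) (hl : DipathBetween D u v l) : ∀ z ∈ l, z ∈ c.supp := fun z hz =>
    ConnectedComponent.sound (hl.reachable_of_mem (fun _ _ => hD.adj) hz).symm
  have hv : v ∈ c.supp := mem l₁ hl₁ v hl₁.right_mem
  lift l₁ to List c.supp using mem l₁ hl₁
  lift l₂ to List c.supp using mem l₂ hl₂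
  have lift_dipath {l : List c.supp} (hl : DipathBetween D u v (l.map Subtype.val)) :=
    (dipathBetween_map_iff (x := (⟨u, rfl⟩ : c.supp)) (y := ⟨v, hv⟩) Subtype.val_injective).mp hl
  exact congrArg _ (h c _ _ (lift_dipath hl₁) (lift_dipath hl₂))

theorem admitsKT_of_forall_connectedComponent
    (h : ∀ c : G.ConnectedComponent, AdmitsKT (G.induce c.supp)) : AdmitsKT G := by
  choose DC hDC using h
  let D (u v : V) : Prop := ∃ c, ∃ (hu : u ∈ c.supp) (hv : v ∈ c.supp), DC c ⟨u, hu⟩ ⟨v, hv⟩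
  have hD (c) (x y : c.supp) : D x y ↔ DC c x y := by
    refine ⟨fun ⟨c', hu, hv, h⟩ => ?_, fun h => ⟨c, x.2, y.2, h⟩⟩
    obtain rfl : c' = c := hu.symm.trans x.2
    exact h
  have hor : IsOrientation G D := by
    refine ⟨fun u v => ⟨fun huv => ?_, ?_⟩, ?_⟩
    · let c := G.connectedComponentMk u
      have hv : v ∈ c.supp := ConnectedComponent.sound huv.reachable.symm
      exact ((hDC c).1.1 ⟨u, rfl⟩ ⟨v, hv⟩ |>.mp huv).imp (⟨c, rfl, hv, ·⟩) (⟨c, hv, rfl, ·⟩)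
    · rintro (⟨c, hu, hv, h⟩ | ⟨c, hu, hv, h⟩)
      · exact (hDC c).1.adj h
      · exact ((hDC c).1.adj h).symm
    · rintro u v ⟨⟨c, hu, hv, h⟩, h'⟩
      exact (hDC c).1.2 ⟨u, hu⟩ ⟨v, hv⟩ ⟨h, (hD c ⟨v, hv⟩ ⟨u, hu⟩).mp h'⟩
  refine ⟨D, hor, isKT_of_forall_connectedComponent hor fun c => ?_⟩
  have hDc : (fun x y : c.supp => D x y) = DC c := funext₂ fun x y => propext (hD c x y)
  exact hDc ▸ (hDC c).2

end Orientations

section AddArc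

variable {V : Type*} {D : V → V → Prop} {a b u v : V} {l : List V}

def addArc (D : V → V → Prop) (a b : V) : V → V → Prop :=
  fun x y => D x y ∨ x = a ∧ y = b

theorem List.IsChain.of_addArc (h : l.IsChain (addArc D a b))
    (hab : ∀ s t, l ≠ s ++ a :: b :: t) : l.IsChain D := by
  refine List.isChain_iff_forall_rel_of_append_cons_cons.mpr fun x y s t hl => ?_
  rcases List.isChain_iff_forall_rel_of_append_cons_cons.mp h hl with h | ⟨rfl, rfl⟩
  · exact h
  · exact absurd hl (hab s t)

theorem IsDipath.addArc_cases (h : IsDipath (addArc D a b) u v l) :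
    IsDipath D u v l ∨ ∃ p q, l = p ++ q ∧ IsDipath D u a p ∧ IsDipath D b v q := by
  obtain ⟨hc, hn, hu, hv⟩ := h
  by_cases hsplit : ∃ s t, l = s ++ a :: b :: t
  · obtain ⟨s, t, rfl⟩ := hsplit
    obtain ⟨hcs, -, hct⟩ := List.isChain_append_cons_cons.mp hc
    have hn' : (s ++ [a] ++ b :: t).Nodup := by simpa using hn
    obtain ⟨hns, hnt, hdisj⟩ := List.nodup_append.mp hn'
    refine Or.inr ⟨s ++ [a], b :: t, by simp, ⟨hcs.of_addArc ?_, hns, ?_, by simp⟩,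
      ⟨hct.of_addArc ?_, hnt, rfl, ?_⟩⟩
    · exact fun s' t' h => hdisj b (h ▸ by simp) b (by simp) rfl
    · cases s <;> simpa using hu
    · exact fun s' t' h => hdisj a (by simp) a (h ▸ by simp) rfl
    · simpa [List.getLast?_append] using hv
  · push Not at hsplit
    exact Or.inl ⟨hc.of_addArc hsplit, hn, hu, hv⟩

variable {H : SimpleGraph V}

theorem IsDipath.of_addArc_of_reachable (hD : ∀ x y, D x y → H.Adj x y)
    (hab : ¬H.Reachable a b) (h : IsDipath (addArc D a b) u v l) (huv : H.Reachable u v) :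
    IsDipath D u v l := by
  rcases h.addArc_cases with h | ⟨p, q, -, hp, hq⟩
  · exact h
  · exact absurd ((hp.reachable hD).symm.trans (huv.trans (hq.reachable hD).symm)) hab

theorem IsDipath.addArc_split (hD : ∀ x y, D x y → H.Adj x y)
    (h : IsDipath (addArc D a b) u v l) (huv : ¬H.Reachable u v) :
    ∃ p q, l = p ++ q ∧ IsDipath D u a p ∧ IsDipath D b v q :=
  h.addArc_cases.resolve_left fun h => huv (h.reachable hD)

theorem IsDipath.addArc_unique (hD : ∀ x y, D x y → H.Adj x y) (hkt : IsKT D)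
    (huv : ¬H.Reachable u v) {l₁ l₂ : List V} (h₁ : IsDipath (addArc D a b) u v l₁)
    (h₂ : IsDipath (addArc D a b) u v l₂) : l₁ = l₂ := by
  obtain ⟨p₁, q₁, rfl, hp₁, hq₁⟩ := h₁.addArc_split hD huv
  obtain ⟨p₂, q₂, rfl, hp₂, hq₂⟩ := h₂.addArc_split hD huv
  rw [hkt u a (Or.inl hp₁) (Or.inl hp₂), hkt b v (Or.inl hq₁) (Or.inl hq₂)]

theorem isKT_addArc (hD : ∀ x y, D x y → H.Adj x y) (hkt : IsKT D) (hab : ¬H.Reachable a b) :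
    IsKT (addArc D a b) := by
  intro u v l₁ h₁ l₂ h₂
  by_cases huv : H.Reachable u v
  · have reduce {l} (h : DipathBetween (addArc D a b) u v l) : DipathBetween D u v l :=
      h.imp (·.of_addArc_of_reachable hD hab huv) (·.of_addArc_of_reachable hD hab huv.symm)
    exact hkt u v (reduce h₁) (reduce h₂)
  · have not_reverse {l l'} (h : IsDipath (addArc D a b) u v l)
        (h' : IsDipath (addArc D a b) v u l') : False := by
      obtain ⟨p, -, -, hp, -⟩ := h.addArc_split hD huv
      obtain ⟨p', -, -, hp', -⟩ := h'.addArc_split hD (huv ∘ .symm)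
      exact huv ((hp.reachable hD).trans (hp'.reachable hD).symm)
    rcases h₁ with h₁ | h₁ <;> rcases h₂ with h₂ | h₂
    · exact h₁.addArc_unique hD hkt huv h₂
    · exact (not_reverse h₁ h₂).elim
    · exact (not_reverse h₂ h₁).elim
    · exact h₁.addArc_unique hD hkt (huv ∘ .symm) h₂

theorem isOrientation_addArc (hD : IsOrientation H D) (hab : ¬H.Reachable a b) :
    IsOrientation (H ⊔ edge a b) (addArc D a b) := by
  have hne : a ≠ b := fun h => hab (h ▸ .refl a)
  have hba : ¬D b a := fun h => hab (hD.adj h).reachable.symm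
  refine ⟨fun u v => ?_, fun u v => ?_⟩
  · simp only [sup_adj, edge_adj, hD.1 u v, addArc]
    grind
  · rintro ⟨h | ⟨rfl, rfl⟩, h' | h'⟩
    · exact hD.2 u v ⟨h, h'⟩
    · obtain ⟨rfl, rfl⟩ := h'
      exact hba h
    · exact hba h'
    · exact hne h'.2

theorem AdmitsKT.sup_edge (h : AdmitsKT H) (hab : ¬H.Reachable a b) :
    AdmitsKT (H ⊔ edge a b) :=
  let ⟨D, hD, hkt⟩ := h
  ⟨addArc D a b, isOrientation_addArc hD hab, isKT_addArc (fun _ _ => hD.adj) hkt hab⟩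

end AddArc

/-- If `e = s(a,b)` is a bridge of `G`, then `G` admits a KT orientation iff every
connected component of `G − e` admits a KT orientation. -/
theorem bridge_kt {V : Type*} (G : SimpleGraph V) (a b : V)
    (hb : G.IsBridge s(a, b)) :
    AdmitsKT G ↔
      ∀ c : (G.deleteEdges {s(a, b)}).ConnectedComponent,
        AdmitsKT ((G.deleteEdges {s(a, b)}).induce c.supp) := by
  refine ⟨fun h c => (h.mono (G.deleteEdges_le _)).comap (.subtype _), fun h => ?_⟩
  have hle : G ≤ G.deleteEdges {s(a, b)} ⊔ edge a b := le_sdiff_sup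
  exact ((admitsKT_of_forall_connectedComponent h).sup_edge (isBridge_iff.mp hb)).mono hle
end

section
/- An orientation of a cycle C_n (n ≥ 4) is a KT orientation if and only if the orientation changes direction at least three times around the cycle, i.e., the cycle has at least two sources (equivalently, at least two sinks) among its vertices. -/
/-!
A directed path in an orientation of the cycle never turns back, so it runs monotonically along
one of the two arcs between its endpoints. Two distinct directed paths between `u` and `v`
therefore use both arcs, each consistently oriented: the orientation changes direction only at
`u` and `v`, which leaves at most one source. Conversely, if there is at most one source `a`, the
edge directions read from `a` around the cycle form at most two constant blocks, and the two arcs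
between the block boundaries are two directed paths between the same vertices. Sinks are the
sources of the reversed orientation.
-/

lemma List.length_le_one_of_isChain_reverse {α : Type*} {R : α → α → Prop}
    (hasym : ∀ a b, ¬ (R a b ∧ R b a)) {l : List α} (h : l.IsChain R)
    (hrev : l.reverse.IsChain R) : l.length ≤ 1 := by
  match l, h, hrev with
  | [], _, _ | [_], _, _ => simp
  | a :: b :: _, h, hrev =>
    exact absurd ⟨(List.isChain_cons_cons.1 h).1,
      (List.isChain_cons_cons.1 (List.isChain_reverse.1 hrev)).1⟩ (hasym a b)

lemma Nat.exists_cut_of_antitone {p : ℕ → Prop} {n : ℕ} (hn : 2 ≤ n)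
    (hp : ∀ k, k + 1 < n → p (k + 1) → p k) :
    ∃ c, 0 < c ∧ c < n ∧ ((∀ k < c, p k) ∨ ∀ k < c, ¬ p k) ∧
      ((∀ k < n - c, p (c + k)) ∨ ∀ k < n - c, ¬ p (c + k)) := by
  classical
  have hanti : ∀ i j, i ≤ j → j < n → p j → p i := by
    intro i j hij
    induction j, hij using Nat.le_induction with
    | base => exact fun _ => id
    | succ j _ ih => exact fun hj h => ih (by omega) (hp j hj h)
  by_cases hall : ∃ k < n, ¬ p k
  swap
  · simp only [not_exists, not_and, not_not] at hall
    exact ⟨1, one_pos, by omega, Or.inl fun k hk => hall k (by omega),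
      Or.inl fun k hk => hall _ (by omega)⟩
  obtain ⟨k₀, hk₀, hpk₀⟩ := hall
  by_cases h₀ : p 0
  · have hex : ∃ k, ¬ p k := ⟨k₀, hpk₀⟩
    have hc₀ : Nat.find hex ≠ 0 := fun h => Nat.find_spec hex (h ▸ h₀)
    refine ⟨Nat.find hex, Nat.pos_of_ne_zero hc₀, (Nat.find_min' hex hpk₀).trans_lt hk₀,
      Or.inl fun k hk => not_not.1 (Nat.find_min hex hk), Or.inr fun k hk h => ?_⟩
    exact Nat.find_spec hex (hanti _ _ (Nat.le_add_right _ k) (by omega) h)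
  · exact ⟨1, one_pos, by omega, Or.inr fun k hk => by rwa [Nat.lt_one_iff.1 hk],
      Or.inr fun k hk h => h₀ (hanti 0 _ (Nat.zero_le _) (by omega) h)⟩

lemma IsDipath.reverse_of_flip {V : Type*} {D : V → V → Prop} {u v : V} {l : List V}
    (h : IsDipath (flip D) u v l) : IsDipath D v u l.reverse :=
  ⟨List.isChain_reverse.2 h.1, List.nodup_reverse.2 h.2.1,
    by rw [List.head?_reverse]; exact h.2.2.2, by rw [List.getLast?_reverse]; exact h.2.2.1⟩

lemma isKT_flip {V : Type*} {D : V → V → Prop} (h : IsKT D) : IsKT (flip D) := by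
  have hrev : ∀ {u v l}, DipathBetween (flip D) u v l → DipathBetween D u v l.reverse := by
    rintro u v l (hl | hl)
    exacts [Or.inr hl.reverse_of_flip, Or.inl hl.reverse_of_flip]
  exact fun u v l₁ h₁ l₂ h₂ => List.reverse_injective (h u v (hrev h₁) (hrev h₂))

lemma isOrientation_flip {V : Type*} {G : SimpleGraph V} {D : V → V → Prop}
    (h : IsOrientation G D) : IsOrientation G (flip D) :=
  ⟨fun u v => (h.1 u v).trans or_comm, fun u v huv => h.2 v u huv⟩

namespace CycleKT

section Progression

variable {G : Type*} [AddCommGroup G]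

def progression (a s : G) (m : ℕ) : List G :=
  (List.range (m + 1)).map fun k => a + k • s

@[simp] lemma length_progression (a s : G) (m : ℕ) : (progression a s m).length = m + 1 := by
  simp [progression]

lemma progression_succ (a s : G) (m : ℕ) :
    progression a s (m + 1) = a :: progression (a + s) s m := by
  rw [progression, List.range_succ_eq_map, List.map_cons, List.map_map, zero_smul, add_zero]
  refine congrArg _ (List.map_congr_left fun k _ => ?_)
  simp only [Function.comp_apply, succ_nsmul']
  abel

@[simp] lemma progression_zero (a s : G) : progression a s 0 = [a] := by
  simp [progression]

@[simp] lemma head?_progression (a s : G) (m : ℕ) : (progression a s m).head? = some a := by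
  cases m <;> simp [progression_succ]

@[simp] lemma getLast?_progression (a s : G) (m : ℕ) :
    (progression a s m).getLast? = some (a + m • s) := by
  simp [progression, List.getLast?_map, List.range_succ]

lemma isChain_progression {R : G → G → Prop} {a s : G} {m : ℕ} :
    (progression a s m).IsChain R ↔ ∀ k < m, R (a + k • s) (a + k • s + s) := by
  simp only [progression, List.isChain_map, List.isChain_range_succ, Nat.succ_eq_add_one,
    succ_nsmul, add_assoc]

lemma reverse_progression (a s : G) (m : ℕ) :
    (progression a s m).reverse = progression (a + m • s) (-s) m := by
  refine List.ext_getElem (by simp) fun i h₁ h₂ => ?_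
  simp only [length_progression] at h₂
  simp only [List.getElem_reverse, progression, List.getElem_map, List.getElem_range,
    List.length_map, List.length_range]
  rw [show m + 1 - 1 - i = m - i by omega, sub_nsmul _ (by omega : i ≤ m)]
  simp only [smul_neg]
  abel

lemma eq_and_eq_of_progression_succ_eq {a b s t : G} {m m' : ℕ}
    (h : progression a s (m + 1) = progression b t (m' + 1)) : a = b ∧ s = t := by
  simp only [progression_succ, List.cons.injEq] at h
  have h2 := congrArg List.head? h.2
  simp only [head?_progression, Option.some.injEq] at h2
  exact ⟨h.1, by rw [h.1] at h2; exact add_left_cancel h2⟩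

lemma eq_progression_of_isChain {R : G → G → Prop} {e : G}
    (hstep : ∀ a b, R a b → b = a + e ∨ b = a - e) (l : List G) (x : G)
    (hchain : (x :: l).IsChain R) (hnodup : (x :: l).Nodup) :
    ∃ s, (s = e ∨ s = -e) ∧ x :: l = progression x s l.length := by
  induction l generalizing x with
  | nil => exact ⟨e, Or.inl rfl, by simp⟩
  | cons b l ih =>
    rw [List.isChain_cons_cons] at hchain
    obtain ⟨s, hs, hl⟩ := ih b hchain.2 hnodup.of_cons
    obtain ⟨t, ht, hxb⟩ : ∃ t, (t = e ∨ t = -e) ∧ b = x + t := by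
      rcases hstep x b hchain.1 with h | h
      · exact ⟨e, Or.inl rfl, h⟩
      · exact ⟨-e, Or.inr rfl, by rw [h, sub_eq_add_neg]⟩
    refine ⟨t, ht, ?_⟩
    suffices b :: l = progression b t l.length by
      rw [List.length_cons, progression_succ, ← hxb, this]
    cases l with
    | nil => simp
    | cons c l =>
      rw [List.length_cons, progression_succ] at hl ⊢
      obtain ⟨-, hl⟩ := List.cons_eq_cons.1 hl
      have hc : c = b + s := by simpa using congrArg List.head? hl
      -- a step back would revisit `x`
      have hts : t = s := by
        have hxc : x ≠ c := fun h => (List.nodup_cons.1 hnodup).1 (by simp [h])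
        rcases ht with rfl | rfl <;> rcases hs with rfl | rfl
        · rfl
        · exact absurd (by rw [hc, hxb]; abel) hxc
        · exact absurd (by rw [hc, hxb]; abel) hxc
        · rfl
      rw [hts, ← hl]

end Progression

open Fin.NatCast Fin.CommRing

variable {n : ℕ} [NeZero n]

lemma eq_val_of_natCast_eq {m : ℕ} {x : Fin n} (hm : m < n) (h : (m : Fin n) = x) :
    m = x.val := by
  rw [← h, Fin.val_cast_of_lt hm]

lemma add_val_sub (u v : Fin n) : u + ((v - u).val : Fin n) = v := by
  rw [Fin.cast_val_eq_self]; ring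

lemma nodup_progression_one (a : Fin n) {m : ℕ} (hm : m < n) : (progression a 1 m).Nodup := by
  refine List.nodup_range.map_on fun i hi j hj hij => ?_
  simp only [List.mem_range, nsmul_one, add_right_inj] at hi hj hij
  rw [← Fin.val_cast_of_lt (show i < n by omega), hij, Fin.val_cast_of_lt (show j < n by omega)]

lemma reverse_progression_one (u v : Fin n) :
    (progression u 1 (v - u).val).reverse = progression v (-1) (v - u).val := by
  rw [reverse_progression, nsmul_one, add_val_sub]

def OnArc (a : Fin n) (m : ℕ) (l : List (Fin n)) : Prop :=
  l = progression a 1 m ∨ l = (progression a 1 m).reverse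

/-- The clockwise arc `a, a + 1, …, a + m` is a directed path in one of its two directions. -/
def IsMonotoneArc (D : Fin n → Fin n → Prop) (a : Fin n) (m : ℕ) : Prop :=
  ∃ l, OnArc a m l ∧ l.IsChain D

lemma isMonotoneArc_of_forall {D : Fin n → Fin n → Prop} {a : Fin n} {m : ℕ}
    (h : (∀ k < m, D (a + k) (a + k + 1)) ∨ ∀ k < m, D (a + k + 1) (a + k)) :
    IsMonotoneArc D a m := by
  rcases h with h | h
  · exact ⟨_, Or.inl rfl, isChain_progression.2 (by simpa using h)⟩
  · exact ⟨_, Or.inr rfl, List.isChain_reverse.2 (isChain_progression.2 (by simpa using h))⟩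

section Dipaths

variable {D : Fin n → Fin n → Prop}

lemma eq_progression_of_isDipath (hstep : ∀ a b, D a b → b = a + 1 ∨ b = a - 1)
    {p q : Fin n} {l : List (Fin n)} (h : IsDipath D p q l) :
    l = progression p 1 (q - p).val ∨ l = (progression q 1 (p - q).val).reverse := by
  obtain ⟨hchain, hnodup, hhead, hlast⟩ := h
  obtain _ | ⟨x, t⟩ := l
  · simp at hhead
  obtain rfl : x = p := by simpa using hhead
  have ht : t.length < n := by simpa using hnodup.length_le_card
  obtain ⟨s, rfl | rfl, hl⟩ := eq_progression_of_isChain hstep t x hchain hnodup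
  all_goals
    rw [hl, getLast?_progression, Option.some_inj] at hlast
    rw [hl]
  · left
    rw [eq_val_of_natCast_eq ht
      (show (t.length : Fin n) = q - x by rw [← hlast, nsmul_one]; ring)]
  · right
    rw [eq_val_of_natCast_eq ht
      (show (t.length : Fin n) = x - q by rw [← hlast, smul_neg, nsmul_one]; ring),
      reverse_progression_one]

lemma onArc_or_onArc_of_dipathBetween (hstep : ∀ a b, D a b → b = a + 1 ∨ b = a - 1)
    {u v : Fin n} {l : List (Fin n)} (h : DipathBetween D u v l) :
    OnArc u (v - u).val l ∨ OnArc v (u - v).val l := by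
  rcases h with h | h <;> rcases eq_progression_of_isDipath hstep h with h | h
  · exact Or.inl (Or.inl h)
  · exact Or.inr (Or.inr h)
  · exact Or.inr (Or.inl h)
  · exact Or.inl (Or.inr h)

lemma dipathBetween_of_onArc {u v : Fin n} {l : List (Fin n)} (h : OnArc u (v - u).val l)
    (hchain : l.IsChain D) : DipathBetween D u v l := by
  have hnodup := nodup_progression_one u (v - u).isLt
  rcases h with rfl | rfl
  · refine Or.inl ⟨hchain, hnodup, by simp, ?_⟩
    rw [getLast?_progression, nsmul_one, add_val_sub]
  · refine Or.inr ⟨hchain, List.nodup_reverse.2 hnodup, ?_, by simp⟩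
    rw [List.head?_reverse, getLast?_progression, nsmul_one, add_val_sub]

lemma OnArc.eq_of_isChain (hasym : ∀ a b, ¬ (D a b ∧ D b a)) {a : Fin n} {m : ℕ}
    {l₁ l₂ : List (Fin n)} (h₁ : OnArc a m l₁) (h₂ : OnArc a m l₂)
    (hc₁ : l₁.IsChain D) (hc₂ : l₂.IsChain D) : l₁ = l₂ := by
  have key : (progression a 1 m).IsChain D → (progression a 1 m).reverse.IsChain D →
      progression a 1 m = (progression a 1 m).reverse := by
    intro hc hrev
    have := List.length_le_one_of_isChain_reverse hasym hc hrev
    obtain rfl : m = 0 := by simpa using this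
    simp
  rcases h₁ with rfl | rfl <;> rcases h₂ with rfl | rfl
  · rfl
  · exact key hc₁ hc₂
  · exact (key hc₂ hc₁).symm
  · rfl

lemma not_onArc_of_onArc (h2 : (2 : Fin n) ≠ 0) {u v : Fin n} (huv : u ≠ v)
    {l : List (Fin n)} (h₁ : OnArc u (v - u).val l) : ¬ OnArc v (u - v).val l := by
  have hne : (1 : Fin n) ≠ -1 := fun h => h2 (by
    rw [← one_add_one_eq_two]; nth_rw 2 [h]; exact add_neg_cancel 1)
  obtain ⟨d, hd⟩ :=
    Nat.exists_eq_succ_of_ne_zero (Fin.val_ne_zero_iff.2 (sub_ne_zero.2 huv.symm))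
  obtain ⟨d', hd'⟩ := Nat.exists_eq_succ_of_ne_zero (Fin.val_ne_zero_iff.2 (sub_ne_zero.2 huv))
  unfold OnArc at h₁ ⊢
  rw [reverse_progression_one] at h₁ ⊢
  rw [hd] at h₁
  rw [hd']
  rintro (rfl | rfl) <;> rcases h₁ with h | h
  · exact huv (eq_and_eq_of_progression_succ_eq h).1.symm
  · exact hne (eq_and_eq_of_progression_succ_eq h).2
  · exact hne.symm (eq_and_eq_of_progression_succ_eq h).2
  · exact huv (eq_and_eq_of_progression_succ_eq h).1

lemma not_isKT_iff (hstep : ∀ a b, D a b → b = a + 1 ∨ b = a - 1)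
    (hasym : ∀ a b, ¬ (D a b ∧ D b a)) (h2 : (2 : Fin n) ≠ 0) :
    ¬ IsKT D ↔
      ∃ u v, u ≠ v ∧ IsMonotoneArc D u (v - u).val ∧ IsMonotoneArc D v (u - v).val := by
  constructor
  · intro h
    simp only [IsKT, not_forall, Set.not_subsingleton_iff] at h
    obtain ⟨u, v, l₁, h₁, l₂, h₂, hne⟩ := h
    have hc₁ : l₁.IsChain D := by rcases h₁ with h | h <;> exact h.1
    have hc₂ : l₂.IsChain D := by rcases h₂ with h | h <;> exact h.1
    rcases onArc_or_onArc_of_dipathBetween hstep h₁ with a₁ | b₁ <;>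
      rcases onArc_or_onArc_of_dipathBetween hstep h₂ with a₂ | b₂
    · exact absurd (a₁.eq_of_isChain hasym a₂ hc₁ hc₂) hne
    · refine ⟨u, v, ?_, ⟨l₁, a₁, hc₁⟩, ⟨l₂, b₂, hc₂⟩⟩
      -- for `u = v` the two arcs coincide
      rintro rfl
      exact hne (a₁.eq_of_isChain hasym b₂ hc₁ hc₂)
    · refine ⟨u, v, ?_, ⟨l₂, a₂, hc₂⟩, ⟨l₁, b₁, hc₁⟩⟩
      rintro rfl
      exact hne (b₁.eq_of_isChain hasym a₂ hc₁ hc₂)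
    · exact absurd (b₁.eq_of_isChain hasym b₂ hc₁ hc₂) hne
  · rintro ⟨u, v, huv, ⟨l₁, h₁, hc₁⟩, ⟨l₂, h₂, hc₂⟩⟩ hKT
    have heq := hKT u v (dipathBetween_of_onArc h₁ hc₁)
      (Or.symm (dipathBetween_of_onArc h₂ hc₂))
    exact not_onArc_of_onArc h2 huv h₁ (heq ▸ h₂)

end Dipaths

section Sources

variable {D : Fin n → Fin n → Prop}

lemma IsMonotoneArc.exists_rel_of_lt {a : Fin n} {m j : ℕ} (h : IsMonotoneArc D a m)
    (hj₀ : 0 < j) (hjm : j < m) : ∃ x, D x (a + j) := by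
  obtain ⟨l, rfl | rfl, hc⟩ := h
  · obtain ⟨i, rfl⟩ := Nat.exists_eq_add_of_lt hj₀
    have := isChain_progression.1 hc i (by omega)
    simp only [nsmul_one] at this
    exact ⟨_, by simpa [add_assoc] using this⟩
  · have := isChain_progression.1 (List.isChain_reverse.1 hc) j hjm
    simp only [nsmul_one] at this
    exact ⟨_, this⟩

lemma IsMonotoneArc.exists_rel {a : Fin n} {m : ℕ} (h : IsMonotoneArc D a m) (hm : 0 < m) :
    (∃ x, D x a) ∨ ∃ x, D x (a + m) := by
  obtain ⟨l, rfl | rfl, hc⟩ := h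
  · obtain ⟨i, rfl⟩ := Nat.exists_eq_add_of_lt hm
    have := isChain_progression.1 hc i (by omega)
    simp only [nsmul_one] at this
    exact Or.inr ⟨_, by simpa [add_assoc] using this⟩
  · have := isChain_progression.1 (List.isChain_reverse.1 hc) 0 hm
    exact Or.inl ⟨_, by simpa using this⟩

lemma exists_eq_add_of_ne {u v w : Fin n} (huv : u ≠ v) (hwu : w ≠ u) (hwv : w ≠ v) :
    (∃ j, 0 < j ∧ j < (v - u).val ∧ w = u + j) ∨
      ∃ j, 0 < j ∧ j < (u - v).val ∧ w = v + j := by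
  have hpos : ∀ {x y : Fin n}, x ≠ y → 0 < (x - y).val := fun h =>
    Nat.pos_of_ne_zero (Fin.val_ne_zero_iff.2 (sub_ne_zero.2 h))
  have hne : (w - u).val ≠ (v - u).val := fun h => hwv (sub_left_inj.1 (Fin.ext h))
  rcases Nat.lt_or_gt_of_ne hne with h | h
  · exact Or.inl ⟨_, hpos hwu, h, (add_val_sub u w).symm⟩
  · refine Or.inr ⟨_, hpos hwv, ?_, (add_val_sub v w).symm⟩
    have hwv' : (w - v).val = (w - u).val - (v - u).val := by
      rw [← Fin.sub_val_of_le (Fin.lt_def.2 h).le]; ring_nf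
    have huv' : (u - v).val = n - (v - u).val := by
      rw [show u - v = -(v - u) by ring, Fin.val_neg', Nat.mod_eq_of_lt]
      have := hpos huv.symm
      omega
    have := (w - u).isLt
    omega

lemma ncard_sources_le_one {u v : Fin n} (huv : u ≠ v) (hα : IsMonotoneArc D u (v - u).val)
    (hβ : IsMonotoneArc D v (u - v).val) : {w | ∀ x, ¬ D x w}.ncard ≤ 1 := by
  have hsub : ∀ w, (∀ x, ¬ D x w) → w = u ∨ w = v := by
    intro w hw
    by_contra! h
    rcases exists_eq_add_of_ne huv h.1 h.2 with ⟨j, hj₀, hj, rfl⟩ | ⟨j, hj₀, hj, rfl⟩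
    · obtain ⟨x, hx⟩ := hα.exists_rel_of_lt hj₀ hj
      exact hw x hx
    · obtain ⟨x, hx⟩ := hβ.exists_rel_of_lt hj₀ hj
      exact hw x hx
  have hboth : ¬ ((∀ x, ¬ D x u) ∧ ∀ x, ¬ D x v) := by
    rintro ⟨hu, hv⟩
    have hpos : 0 < (v - u).val :=
      Nat.pos_of_ne_zero (Fin.val_ne_zero_iff.2 (sub_ne_zero.2 huv.symm))
    rcases hα.exists_rel hpos with ⟨x, hx⟩ | ⟨x, hx⟩
    · exact hu x hx
    · rw [add_val_sub] at hx
      exact hv x hx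
  refine (Set.ncard_le_one_iff (Set.toFinite _)).2 fun {a b} ha hb => ?_
  rcases hsub a ha with rfl | rfl <;> rcases hsub b hb with rfl | rfl
  · rfl
  · exact absurd ⟨ha, hb⟩ hboth
  · exact absurd ⟨hb, ha⟩ hboth
  · rfl

end Sources

end CycleKT

namespace IsOrientation

open CycleKT Fin.NatCast Fin.CommRing

variable {n : ℕ} [NeZero n] {D : Fin n → Fin n → Prop}
  (hor : IsOrientation (SimpleGraph.fromRel fun i j : Fin n => j = i + 1) D)
include hor

lemma eq_add_one_or_eq_sub_one {a b : Fin n} (h : D a b) :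
    b = a + 1 ∨ b = a - 1 := by
  have hadj := (hor.1 a b).2 (Or.inl h)
  rw [SimpleGraph.fromRel_adj] at hadj
  exact hadj.2.imp id fun h => eq_sub_of_add_eq h.symm

lemma rel_add_one_of_not_rel (hn : 2 ≤ n) {a : Fin n} (h : ¬ D a (a + 1)) :
    D (a + 1) a := by
  have : Nontrivial (Fin n) := Fin.nontrivial_iff_two_le.2 hn
  have hadj : (SimpleGraph.fromRel fun i j : Fin n => j = i + 1).Adj a (a + 1) := by
    rw [SimpleGraph.fromRel_adj]
    exact ⟨by simp, Or.inl rfl⟩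
  exact ((hor.1 a (a + 1)).1 hadj).resolve_left h

lemma forall_not_rel_of {w : Fin n} (h₁ : D w (w + 1)) (h₂ : ¬ D (w - 1) w) :
    ∀ x, ¬ D x w := by
  intro x hx
  rcases hor.eq_add_one_or_eq_sub_one hx with h | h
  · exact h₂ (by rwa [show w - 1 = x by rw [h]; ring])
  · exact hor.2 _ _ ⟨h₁, by rwa [show w + 1 = x by rw [h]; ring]⟩

lemma exists_isMonotoneArc_of_ncard_sources_le_one (hn : 2 ≤ n)
    (h : {w | ∀ x, ¬ D x w}.ncard ≤ 1) :
    ∃ u v, u ≠ v ∧ IsMonotoneArc D u (v - u).val ∧ IsMonotoneArc D v (u - v).val := by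
  have hne : ∀ {k : ℕ}, 0 < k → k < n → (k : Fin n) ≠ 0 := fun h₀ hk h =>
    (Nat.eq_zero_of_dvd_of_lt (Fin.natCast_eq_zero.1 h) hk).not_gt h₀
  obtain ⟨a, ha⟩ : ∃ a, ∀ w, (∀ x, ¬ D x w) → w = a := by
    by_cases hS : ∃ a, ∀ x, ¬ D x a
    · obtain ⟨a, ha⟩ := hS
      exact ⟨a, fun w hw => (Set.ncard_le_one_iff (Set.toFinite _)).1 h hw ha⟩
    · exact ⟨0, fun w hw => absurd ⟨w, hw⟩ hS⟩
  obtain ⟨c, hc₀, hcn, hα, hβ⟩ :=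
    Nat.exists_cut_of_antitone (p := fun k : ℕ => D (a + k) (a + k + 1)) hn fun k hk hfwd => by
      -- otherwise `a + (k + 1)` would be a second source
      by_contra hbwd
      have e : a + ((k + 1 : ℕ) : Fin n) = a + k + 1 := by push_cast; ring
      rw [e] at hfwd
      have := ha _ (hor.forall_not_rel_of hfwd (by rwa [add_sub_cancel_right]))
      exact hne (Nat.succ_pos k) hk (add_eq_left.1 (e.trans this))
  have hmono : ∀ {b : Fin n} {m : ℕ}, ((∀ k < m, D (b + k) (b + k + 1)) ∨
      ∀ k < m, ¬ D (b + k) (b + k + 1)) → IsMonotoneArc D b m := fun h =>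
    isMonotoneArc_of_forall (h.imp_right fun h k hk => hor.rel_add_one_of_not_rel hn (h k hk))
  have hcv : (a + c - a).val = c := by rw [add_sub_cancel_left, Fin.val_cast_of_lt hcn]
  have hcu : (a - (a + c)).val = n - c := by
    rw [show a - (a + c) = ((n - c : ℕ) : Fin n) by
      rw [Nat.cast_sub hcn.le, Fin.natCast_self]; ring, Fin.val_cast_of_lt (by omega)]
  refine ⟨a, a + c, fun h => hne hc₀ hcn (by simpa using h.symm), ?_, ?_⟩
  · rw [hcv]
    exact hmono hα
  · rw [hcu]
    exact hmono (by simpa only [Nat.cast_add, add_assoc] using hβ)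

lemma isKT_iff_two_le_ncard_sources (hn : 3 ≤ n) :
    IsKT D ↔ 2 ≤ {w | ∀ x, ¬ D x w}.ncard := by
  have h2 : (2 : Fin n) ≠ 0 := by
    simp [Fin.ext_iff, Nat.mod_eq_of_lt (show 2 < n by omega)]
  rw [← not_iff_not, not_le, Nat.lt_succ_iff,
    not_isKT_iff (fun _ _ => hor.eq_add_one_or_eq_sub_one) hor.2 h2]
  constructor
  · rintro ⟨u, v, huv, hα, hβ⟩
    exact ncard_sources_le_one huv hα hβ
  · exact hor.exists_isMonotoneArc_of_ncard_sources_le_one (by omega)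

end IsOrientation

/-- An orientation of the cycle `C_n` (`n ≥ 4`) is a KT orientation iff it has at least
two sources (equivalently, at least two sinks) among its vertices. -/
theorem cycle_kt_iff_two_sources (n : ℕ) [NeZero n] (hn : 4 ≤ n)
    (D : Fin n → Fin n → Prop)
    (hor : IsOrientation (SimpleGraph.fromRel (fun i j : Fin n => j = i + 1)) D) :
    IsKT D ↔
      (2 ≤ {v : Fin n | ∀ u, ¬ D u v}.ncard ∧
       2 ≤ {v : Fin n | ∀ u, ¬ D v u}.ncard) := by
  have key := fun (E : Fin n → Fin n → Prop) (hE : IsOrientation _ E) =>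
    IsOrientation.isKT_iff_two_le_ncard_sources hE (by omega)
  refine ⟨fun h => ⟨(key D hor).1 h, ?_⟩, fun h => (key D hor).2 h.1⟩
  -- the sinks of `D` are the sources of the reversed orientation
  exact (key _ (isOrientation_flip hor)).1 (isKT_flip h)
end

section
/- In any orientation of a graph, if P and Q are two distinct directed paths between the same pair of vertices u, v with minimal total length (over all such pairs of paths between any pair of vertices), then P and Q are internally disjoint. -/
/-! If an inner vertex `w` lay on both `P` and `Q`, cutting both paths at `w` would give a
pair of paths between `u` and `w` and a pair between `w` and `v`, each strictly shorter in
total than `P, Q`. By minimality both pairs consist of equal paths, and then `P = Q`. -/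

section

variable {V : Type*} {D : V → V → Prop}

theorem IsDipath.two_le_length {a b : V} {l : List V} (h : IsDipath D a b l) (hab : a ≠ b) :
    2 ≤ l.length := by
  obtain ⟨-, -, hhead, hlast⟩ := h
  match l with
  | [] => simp at hhead
  | [x] => simp_all
  | _ :: _ :: _ => simp

theorem IsDipath.split {a b w : V} {A B : List V} (h : IsDipath D a b (A ++ w :: B)) :
    IsDipath D a w (A ++ [w]) ∧ IsDipath D w b (w :: B) := by
  obtain ⟨hchain, hnodup, hhead, hlast⟩ := h
  rw [List.Chain', List.isChain_split] at hchain
  refine ⟨⟨hchain.1, hnodup.sublist (by simp), ?_, by simp⟩,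
    ⟨hchain.2, hnodup.sublist (by simp), rfl, ?_⟩⟩
  · cases A <;> simp_all
  · rwa [List.getLast?_append_of_ne_nil _ (List.cons_ne_nil _ _)] at hlast

/-- The head of `P₁` records the direction of `P`, so `P` is determined by `P₁` and `P₂`. -/
theorem DipathBetween.exists_split {u v w : V} {P : List V} (hP : DipathBetween D u v P)
    (hw : w ∈ P) (hwu : w ≠ u) (hwv : w ≠ v) :
    ∃ P₁ P₂, DipathBetween D u w P₁ ∧ DipathBetween D w v P₂ ∧
      P₁.length < P.length ∧ P₂.length < P.length ∧
      (P₁.head? = some u ∧ P = P₁ ++ P₂.tail ∨ P₁.head? = some w ∧ P = P₂ ++ P₁.tail) := by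
  obtain ⟨A, B, rfl⟩ := List.append_of_mem hw
  rcases hP with hP | hP
  · obtain ⟨h₁, h₂⟩ := hP.split
    have hA := h₁.two_le_length hwu.symm
    have hB := h₂.two_le_length hwv
    simp only [List.length_append, List.length_cons, List.length_nil] at hA hB
    exact ⟨_, _, .inl h₁, .inl h₂, by simp; omega, by simp; omega, .inl ⟨h₁.2.2.1, by simp⟩⟩
  · obtain ⟨h₁, h₂⟩ := hP.split
    have hA := h₁.two_le_length hwv.symm
    have hB := h₂.two_le_length hwu
    simp only [List.length_append, List.length_cons, List.length_nil] at hA hB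
    exact ⟨_, _, .inr h₂, .inr h₁, by simp; omega, by simp; omega, .inr ⟨rfl, by simp⟩⟩

end

/-- Two distinct directed paths between a pair of vertices whose total length is minimal
(over all pairs of distinct directed paths between any pair of vertices) are internally
disjoint. -/
theorem minimal_paths_internally_disjoint {V : Type*} (D : V → V → Prop)
    (u v : V) (P Q : List V)
    (hP : DipathBetween D u v P) (hQ : DipathBetween D u v Q) (hPQ : P ≠ Q)
    (hmin : ∀ (u' v' : V) (P' Q' : List V),
      DipathBetween D u' v' P' → DipathBetween D u' v' Q' → P' ≠ Q' →
      P.length + Q.length ≤ P'.length + Q'.length) :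
    ∀ w, w ∈ P → w ∈ Q → w = u ∨ w = v := by
  intro w hwP hwQ
  by_contra! ⟨hwu, hwv⟩
  obtain ⟨P₁, P₂, hP₁, hP₂, hlP₁, hlP₂, hPsplit⟩ := hP.exists_split hwP hwu hwv
  obtain ⟨Q₁, Q₂, hQ₁, hQ₂, hlQ₁, hlQ₂, hQsplit⟩ := hQ.exists_split hwQ hwu hwv
  have hsegments : P₁ ≠ Q₁ ∨ P₂ ≠ Q₂ := by
    by_contra! ⟨rfl, rfl⟩
    rcases hPsplit with ⟨hhead, rfl⟩ | ⟨hhead, rfl⟩ <;>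
      rcases hQsplit with ⟨hhead', hQ⟩ | ⟨hhead', hQ⟩
    all_goals first
      | exact hPQ hQ.symm
      | exact hwu (Option.some_injective _ (hhead.symm.trans hhead'))
      | exact hwu (Option.some_injective _ (hhead'.symm.trans hhead))
  rcases hsegments with h | h
  · have := hmin u w P₁ Q₁ hP₁ hQ₁ h
    omega
  · have := hmin w v P₂ Q₂ hP₂ hQ₂ h
    omega
end
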